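/- Every weak-permutably convergent series of real numbers is absolutely convergent. -/

import Mathlib

/-!
If `∑ aₙ` converges but `∑ |aₙ|` does not, the nonnegative and the negative terms both have
divergent sums. Enumerate them in order and interleave them, inserting the `k`-th negative term
only after so many nonnegative terms that the partial sum exceeds `k` even once the first `k + 1`
negative terms are subtracted. Every partial sum of this rearrangement after the `k`-th negative
term is at least `k`, so the rearrangement, and with it every bracketing of it, tends to `+∞`.
-/

open Filter Finset Topology

def SeriesConvTo (a : ℕ → ℝ) (s : ℝ) : Prop :=
  Filter.Tendsto (fun n => ∑ i ∈ Finset.range n, a i) Filter.atTop (nhds s)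

def BracketConvTo (c : ℕ → ℝ) (f : ℕ → ℕ) (t : ℝ) : Prop :=
  StrictMono f ∧ f 0 = 0 ∧
    Filter.Tendsto (fun K => ∑ i ∈ Finset.range (f K), c i) Filter.atTop (nhds t)

theorem monotone_sum_range_of_nonneg {M : Type*} [AddCommMonoid M] [PartialOrder M]
    [IsOrderedAddMonoid M] {g : ℕ → M} (hg : ∀ i, 0 ≤ g i) :
    Monotone fun n => ∑ i ∈ range n, g i := fun _ _ h =>
  sum_le_sum_of_subset_of_nonneg (range_subset_range.2 h) fun i _ _ => hg i

namespace Nat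

section Count

variable {P : ℕ → Prop} [DecidablePred P]

variable (P) in
theorem count_add_count_not (t : ℕ) :
    count P t + count (fun i => ¬ P i) t = t := by
  rw [count_eq_card_filter_range, count_eq_card_filter_range, card_filter_add_card_filter_not,
    card_range]

theorem sum_filter_range_eq_sum_range_count {M : Type*} [AddCommMonoid M]
    (hP : (Set.ofPred P).Infinite) (g : ℕ → M) (t : ℕ) :
    ∑ i ∈ range t with P i, g i = ∑ k ∈ range (count P t), g (nth P k) := by
  have himage : {i ∈ range t | P i} = (range (count P t)).image (nth P) := by
    ext i
    simp only [mem_filter, mem_range, mem_image]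
    constructor
    · rintro ⟨hit, hPi⟩
      exact ⟨count P i, count_strict_mono hPi hit, nth_count hPi⟩
    · rintro ⟨k, hk, rfl⟩
      exact ⟨(lt_nth_iff_count_lt hP).mp hk, nth_mem_of_infinite hP k⟩
  rw [himage, sum_image fun x _ y _ h => nth_injective hP h]

theorem infinite_of_tendsto_sum_filter_range_atTop {M : Type*} [AddCommMonoid M] [Preorder M]
    [NoTopOrder M] {g : ℕ → M}
    (h : Tendsto (fun n => ∑ i ∈ range n with P i, g i) atTop atTop) :
    (Set.ofPred P).Infinite := by
  intro hfin
  obtain ⟨N, hN⟩ := hfin.bddAbove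
  have hconst : ∀ n ≥ N + 1, {i ∈ range n | P i} = {i ∈ range (N + 1) | P i} := by
    intro n hn
    ext i
    simp only [mem_filter, mem_range]
    constructor
    · exact fun ⟨_, hi⟩ => ⟨lt_succ_of_le (hN hi), hi⟩
    · exact fun ⟨hi, hPi⟩ => ⟨lt_of_lt_of_le hi hn, hPi⟩
  refine not_tendsto_const_atTop (∑ i ∈ range (N + 1) with P i, g i) atTop (h.congr' ?_)
  filter_upwards [eventually_ge_atTop (N + 1)] with n hn
  rw [hconst n hn]

theorem count_mem_range_apply {c : ℕ → ℕ} [DecidablePred (· ∈ Set.range c)]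
    (hc : StrictMono c) (k : ℕ) : count (· ∈ Set.range c) (c k) = k := by
  have himage : {i ∈ range (c k) | i ∈ Set.range c} = (range k).image c := by
    ext i
    simp only [mem_filter, mem_range, mem_image, Set.mem_range]
    constructor
    · rintro ⟨hik, j, rfl⟩
      exact ⟨j, hc.lt_iff_lt.mp hik, rfl⟩
    · rintro ⟨j, hj, rfl⟩
      exact ⟨hc hj, j, rfl⟩
  rw [count_eq_card_filter_range, himage, Finset.card_image_of_injective _ hc.injective, card_range]

end Count

section PiecewiseNth

variable (C D : ℕ → Prop) [DecidablePred C]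

noncomputable def piecewiseNth (i : ℕ) : ℕ :=
  if C i then nth D (count C i) else nth (fun j => ¬ D j) (count (fun j => ¬ C j) i)

variable {C D}

theorem piecewiseNth_nth (hC : (Set.ofPred C).Infinite) (k : ℕ) :
    piecewiseNth C D (nth C k) = nth D k := by
  rw [piecewiseNth, if_pos (nth_mem_of_infinite hC k), count_nth_of_infinite hC]

theorem piecewiseNth_nth_not (hC' : (Set.ofPred fun i => ¬ C i).Infinite) (k : ℕ) :
    piecewiseNth C D (nth (fun i => ¬ C i) k) = nth (fun i => ¬ D i) k := by
  rw [piecewiseNth, if_neg (nth_mem_of_infinite hC' k), count_nth_of_infinite hC']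

theorem piecewiseNth_piecewiseNth [DecidablePred D] (hC : (Set.ofPred C).Infinite)
    (hC' : (Set.ofPred fun i => ¬ C i).Infinite) (hD : (Set.ofPred D).Infinite)
    (hD' : (Set.ofPred fun i => ¬ D i).Infinite) (i : ℕ) :
    piecewiseNth D C (piecewiseNth C D i) = i := by
  by_cases hi : C i
  · rw [← nth_count hi, piecewiseNth_nth hC, piecewiseNth_nth hD]
  · rw [← nth_count (p := fun j => ¬ C j) hi, piecewiseNth_nth_not hC',
      piecewiseNth_nth_not hD']

/-- The permutation of `ℕ` mapping `C` onto `D` and its complement onto the complement of `D`,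
both in increasing order. -/
noncomputable def piecewiseNthPerm [DecidablePred D] (hC : (Set.ofPred C).Infinite)
    (hC' : (Set.ofPred fun i => ¬ C i).Infinite) (hD : (Set.ofPred D).Infinite)
    (hD' : (Set.ofPred fun i => ¬ D i).Infinite) : Equiv.Perm ℕ where
  toFun := piecewiseNth C D
  invFun := piecewiseNth D C
  left_inv := piecewiseNth_piecewiseNth hC hC' hD hD'
  right_inv := piecewiseNth_piecewiseNth hD hD' hC hC'

theorem sum_range_piecewiseNthPerm {M : Type*} [AddCommMonoid M] [DecidablePred D]
    (hC : (Set.ofPred C).Infinite)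
    (hC' : (Set.ofPred fun i => ¬ C i).Infinite) (hD : (Set.ofPred D).Infinite)
    (hD' : (Set.ofPred fun i => ¬ D i).Infinite) (g : ℕ → M) (t : ℕ) :
    ∑ i ∈ range t, g (piecewiseNthPerm hC hC' hD hD' i) =
      ∑ k ∈ range (count C t), g (nth D k) +
        ∑ k ∈ range (count (fun i => ¬ C i) t), g (nth (fun i => ¬ D i) k) := by
  rw [← sum_filter_add_sum_filter_not (range t) C, sum_filter_range_eq_sum_range_count hC,
    sum_filter_range_eq_sum_range_count hC']
  simp only [piecewiseNthPerm, Equiv.coe_fn_mk, piecewiseNth_nth hC, piecewiseNth_nth_not hC']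

end PiecewiseNth

end Nat

open Nat in
/-- `Y (count C t) + X (count Cᶜ t)` is the `t`-th partial sum of the series that takes the
increments of `Y` at the positions in `C` and those of `X` elsewhere. -/
theorem exists_tendsto_add_count_atTop {X : ℕ → ℝ} (hX : Monotone X)
    (hXtop : Tendsto X atTop atTop) (Y : ℕ → ℝ) :
    ∃ (C : ℕ → Prop) (_ : DecidablePred C), (Set.ofPred C).Infinite ∧
      (Set.ofPred fun i => ¬ C i).Infinite ∧
      Tendsto (fun t => Y (count C t) + X (count (fun i => ¬ C i) t)) atTop atTop := by
  classical
  obtain ⟨m, hm, hmX⟩ := extraction_forall_of_eventually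
    (P := fun k n => (k : ℝ) - Y (k + 1) ≤ X n) fun k => hXtop.eventually_ge_atTop _
  -- The `k`-th position of `C` is preceded by exactly `m k` positions outside `C`.
  set c : ℕ → ℕ := fun k => m k + k
  have hc : StrictMono c := hm.add strictMono_id
  have hcount := count_mem_range_apply hc
  have hgap (k : ℕ) : c k + 1 ∉ Set.range c := by
    rintro ⟨j, hj⟩
    have hkj : k + 1 ≤ j := hc.lt_iff_lt.mp (by omega)
    have hcj := hc.monotone hkj
    have hmk := hm (lt_add_one k)
    simp only [c] at hj hcj
    omega
  refine ⟨(· ∈ Set.range c), inferInstance, Set.infinite_range_of_injective hc.injective,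
    Set.infinite_of_forall_exists_gt fun n => ⟨c n + 1, hgap n, lt_succ_of_le hc.le_apply⟩,
    ?_⟩
  have hbound (t : ℕ) (ht : 1 ≤ count (· ∈ Set.range c) t) :
      (count (· ∈ Set.range c) t : ℝ) - 1 ≤
        Y (count (· ∈ Set.range c) t) + X (count (fun i => ¬ i ∈ Set.range c) t) := by
    obtain ⟨k, hk⟩ : ∃ k, count (· ∈ Set.range c) t = k + 1 :=
      ⟨_, (Nat.sub_add_cancel ht).symm⟩
    have hct : c k < t := by
      by_contra! h
      have := count_monotone (· ∈ Set.range c) h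
      rw [hcount] at this
      omega
    have hmt : m k ≤ count (fun i => ¬ i ∈ Set.range c) t := by
      have := count_add_count_not (· ∈ Set.range c) t
      simp only [c] at hct
      omega
    have hmk := hmX k
    have hXmt := hX hmt
    rw [hk]
    push_cast
    linarith
  have hcount_top : Tendsto (count (· ∈ Set.range c)) atTop atTop :=
    tendsto_atTop_atTop_of_monotone (count_monotone _) fun k => ⟨c k, (hcount k).ge⟩
  refine tendsto_atTop_mono' atTop ?_
    (tendsto_atTop_add_const_right atTop (-1 : ℝ) (tendsto_natCast_atTop_atTop.comp hcount_top))
  filter_upwards [hcount_top.eventually_ge_atTop 1] with t ht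
  simpa [sub_eq_add_neg] using hbound t ht

section Rearrangement

variable {a : ℕ → ℝ} {s : ℝ}

theorem tendsto_sum_filter_neg_atTop
    (hconv : Tendsto (fun n => ∑ i ∈ range n, a i) atTop (𝓝 s))
    (habs : Tendsto (fun n => ∑ i ∈ range n, |a i|) atTop atTop) :
    Tendsto (fun n => ∑ i ∈ range n with a i < 0, -a i) atTop atTop := by
  have hsplit (n : ℕ) : ∑ i ∈ range n with a i < 0, -a i =
      ((∑ i ∈ range n, |a i|) + -∑ i ∈ range n, a i) / 2 := by
    rw [sum_filter, ← sum_neg_distrib, ← sum_add_distrib, sum_div]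
    refine sum_congr rfl fun i _ => ?_
    split_ifs with h
    · rw [abs_of_neg h]; ring
    · rw [abs_of_nonneg (not_lt.mp h)]; ring
  simpa only [hsplit] using (habs.atTop_add hconv.neg).atTop_div_const two_pos

theorem tendsto_sum_filter_not_neg_atTop
    (hconv : Tendsto (fun n => ∑ i ∈ range n, a i) atTop (𝓝 s))
    (habs : Tendsto (fun n => ∑ i ∈ range n, |a i|) atTop atTop) :
    Tendsto (fun n => ∑ i ∈ range n with ¬ a i < 0, a i) atTop atTop := by
  have hsplit (n : ℕ) : ∑ i ∈ range n with ¬ a i < 0, a i =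
      ∑ i ∈ range n, a i + ∑ i ∈ range n with a i < 0, -a i := by
    rw [← sum_filter_add_sum_filter_not (range n) (fun i => a i < 0), sum_neg_distrib]
    ring
  simpa only [hsplit] using hconv.add_atTop (tendsto_sum_filter_neg_atTop hconv habs)

open Nat in
theorem exists_perm_tendsto_sum_atTop
    (hconv : Tendsto (fun n => ∑ i ∈ range n, a i) atTop (𝓝 s))
    (habs : Tendsto (fun n => ∑ i ∈ range n, |a i|) atTop atTop) :
    ∃ σ : Equiv.Perm ℕ, Tendsto (fun t => ∑ i ∈ range t, a (σ i)) atTop atTop := by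
  have hneg := tendsto_sum_filter_neg_atTop hconv habs
  have hpos := tendsto_sum_filter_not_neg_atTop hconv habs
  have hD := infinite_of_tendsto_sum_filter_range_atTop hneg
  have hD' := infinite_of_tendsto_sum_filter_range_atTop hpos
  set X : ℕ → ℝ := fun r => ∑ k ∈ range r, a (nth (fun i => ¬ a i < 0) k)
  have hX : Monotone X :=
    monotone_sum_range_of_nonneg fun k => not_lt.mp (nth_mem_of_infinite hD' k)
  have hXtop : Tendsto X atTop atTop := by
    refine tendsto_atTop_atTop_of_monotone hX fun B => ?_
    obtain ⟨n, hn⟩ := (hpos.eventually_ge_atTop B).exists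
    exact ⟨_, hn.trans_eq (sum_filter_range_eq_sum_range_count hD' a n)⟩
  obtain ⟨C, _, hC, hC', htop⟩ :=
    exists_tendsto_add_count_atTop hX hXtop fun r => ∑ k ∈ range r, a (nth (fun i => a i < 0) k)
  exact ⟨piecewiseNthPerm hC hC' hD hD', by simpa only [sum_range_piecewiseNthPerm] using htop⟩

end Rearrangement

/-- Statement (*): every weak-permutably convergent series is absolutely convergent. -/
theorem weakPermConv_absConv (a : ℕ → ℝ)
    (hconv : ∃ s, SeriesConvTo a s)
    (hweak : ∀ σ : Equiv.Perm ℕ, ∃ f : ℕ → ℕ, ∃ t : ℝ,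
      BracketConvTo (fun n => a (σ n)) f t) :
    ∃ l, SeriesConvTo (fun n => |a n|) l := by
  obtain ⟨s, hs⟩ := hconv
  have habs_mono := monotone_sum_range_of_nonneg fun i => abs_nonneg (a i)
  refine (tendsto_atTop_of_monotone habs_mono).resolve_left fun habs => ?_
  obtain ⟨σ, hσ⟩ := exists_perm_tendsto_sum_atTop hs habs
  obtain ⟨f, t, hf, -, ht⟩ := hweak σ
  exact not_tendsto_nhds_of_tendsto_atTop (hσ.comp hf.tendsto_atTop) t ht
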